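/- Let m₁ and m₂ be two axis-parallel rectangles with disjoint interiors, and let m'₁ and m'₂ be obtained from m₁ and m₂ by expanding each rectangle by the same amount w/2 on the left and right and h/2 on the bottom and top (for fixed w, h ≥ 0). Then m'₁ and m'₂ do not cross, i.e., it is not the case that the x-interval of m'₂ is strictly contained in the x-interval of m'₁ while the y-interval of m'₁ is strictly contained in the y-interval of m'₂. -/
import Mathlib


/-- Expansions (by the same margins `w/2`, `h/2`) of two interior-disjoint
axis-parallel rectangles cannot cross. -/
theorem stmt3 (x1 y1 w1 h1 x2 y2 w2 h2 w h : ℝ)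
    (hw1 : 0 < w1) (hh1 : 0 < h1) (hw2 : 0 < w2) (hh2 : 0 < h2)
    (hw : 0 ≤ w) (hh : 0 ≤ h)
    (hdisj : Disjoint (Set.Ioo x1 (x1 + w1) ×ˢ Set.Ioo y1 (y1 + h1))
                      (Set.Ioo x2 (x2 + w2) ×ˢ Set.Ioo y2 (y2 + h2))) :
    ¬ (((x1 - w / 2 < x2 - w / 2 ∧ x2 + w2 + w / 2 < x1 + w1 + w / 2) ∧
        (y2 - h / 2 < y1 - h / 2 ∧ y1 + h1 + h / 2 < y2 + h2 + h / 2)) ∨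
       ((x2 - w / 2 < x1 - w / 2 ∧ x1 + w1 + w / 2 < x2 + w2 + w / 2) ∧
        (y1 - h / 2 < y2 - h / 2 ∧ y2 + h2 + h / 2 < y1 + h1 + h / 2))) := by
  rw [Set.disjoint_left] at hdisj
  rintro (⟨⟨ha, hb⟩, ⟨hc, hd⟩⟩ | ⟨⟨ha, hb⟩, ⟨hc, hd⟩⟩)
  · exact hdisj (a := (x2 + w2 / 2, y1 + h1 / 2))
      ⟨⟨by linarith, by linarith⟩, ⟨by linarith, by linarith⟩⟩
      ⟨⟨by linarith, by linarith⟩, ⟨by linarith, by linarith⟩⟩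
  · exact hdisj (a := (x1 + w1 / 2, y2 + h2 / 2))
      ⟨⟨by linarith, by linarith⟩, ⟨by linarith, by linarith⟩⟩
      ⟨⟨by linarith, by linarith⟩, ⟨by linarith, by linarith⟩⟩
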